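/- Let μ_i: ℕ → ℝ be positive non-increasing sequences for arms i ∈ [K]. Suppose for a horizon T that a policy π satisfies: for all t ≤ T, the number of pulls n of any arm j with μ_j(n) < max_i μ_i(N_i(t)) − 2q is at most M. Then J(T;π^max) − J(T;π) ≤ KM·max_i μ_i(1) + 2qT, where π^max is the greedy policy. -/
import Mathlib


open Finset

/-- number of pulls of arm `i` by policy `π` strictly before time `t` -/
def pullCount {K : ℕ} (π : ℕ → Fin K) (i : Fin K) (t : ℕ) : ℕ :=
  ((Finset.range t).filter (fun s => π s = i)).card

/-- expected total reward of policy `π` over horizon `T` -/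
def totalReward {K : ℕ} (μ : Fin K → ℕ → ℝ) (π : ℕ → Fin K) (T : ℕ) : ℝ :=
  ∑ t ∈ Finset.range T, μ (π t) (pullCount π (π t) t + 1)

/-- `π` is greedy -/
def IsGreedy {K : ℕ} (μ : Fin K → ℕ → ℝ) (π : ℕ → Fin K) : Prop :=
  ∀ t : ℕ, ∀ i : Fin K, μ i (pullCount π i t + 1) ≤ μ (π t) (pullCount π (π t) t + 1)

private lemma pullCount_succ {K : ℕ} (π : ℕ → Fin K) (i : Fin K) (t : ℕ) :
    pullCount π i (t + 1) = pullCount π i t + if π t = i then 1 else 0 := by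
  unfold pullCount
  rw [Finset.range_add_one, Finset.filter_insert]
  split_ifs with h
  · rw [Finset.card_insert_of_notMem (by simp)]
  · rfl

private lemma sum_pullCount {K : ℕ} (π : ℕ → Fin K) (T : ℕ) :
    ∑ i, pullCount π i T = T := by
  induction T with
  | zero => simp [pullCount]
  | succ T ih =>
    simp only [pullCount_succ, Finset.sum_add_distrib, ih]
    simp

private lemma totalReward_eq {K : ℕ} (μ : Fin K → ℕ → ℝ) (π : ℕ → Fin K) (T : ℕ) :
    totalReward μ π T = ∑ i, ∑ n ∈ Finset.Ioc 0 (pullCount π i T), μ i n := by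
  induction T with
  | zero => simp [totalReward, pullCount]
  | succ T ih =>
    have h1 : ∀ i : Fin K, ∑ n ∈ Finset.Ioc 0 (pullCount π i (T + 1)), μ i n
        = (∑ n ∈ Finset.Ioc 0 (pullCount π i T), μ i n)
          + if π T = i then μ i (pullCount π i T + 1) else 0 := by
      intro i
      rw [pullCount_succ]
      split_ifs with h
      · rw [Finset.sum_Ioc_succ_top (Nat.zero_le _)]
      · simp
    rw [totalReward, Finset.sum_range_succ, ← totalReward, ih]
    simp only [h1, Finset.sum_add_distrib, Finset.sum_ite_eq, Finset.mem_univ, if_true]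

private lemma sum_Ioc_sub (f : ℕ → ℝ) (a b : ℕ) :
    (∑ n ∈ Finset.Ioc 0 a, f n) - (∑ n ∈ Finset.Ioc 0 b, f n)
      = (∑ n ∈ Finset.Ioc b a, f n) - (∑ n ∈ Finset.Ioc a b, f n) := by
  rcases le_total a b with h | h
  · have h1 := Finset.sum_Ioc_consecutive f (Nat.zero_le a) h
    have h2 : Finset.Ioc b a = ∅ := Finset.Ioc_eq_empty (by omega)
    rw [h2]
    simp only [Finset.sum_empty]
    linarith
  · have h1 := Finset.sum_Ioc_consecutive f (Nat.zero_le b) h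
    have h2 : Finset.Ioc a b = ∅ := Finset.Ioc_eq_empty (by omega)
    rw [h2]
    simp only [Finset.sum_empty]
    linarith

private lemma main_aux {K : ℕ} (hK : 0 < K) (hne : (Finset.univ : Finset (Fin K)).Nonempty)
    (μ : Fin K → ℕ → ℝ)
    (hpos : ∀ i n, 0 < μ i n)
    (hanti : ∀ i, Antitone (μ i))
    (q : ℝ) (hq : 0 < q) (M T : ℕ)
    (πmax π : ℕ → Fin K)
    (hfew : ∀ j : Fin K,
      (((Finset.Icc 1 (pullCount π j T)).filter (fun n =>
        μ j n < (Finset.univ.sup' hne (fun i => μ i (pullCount π i T))) - 2 * q)).card : ℕ) ≤ M) :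
    totalReward μ πmax T - totalReward μ π T ≤
      (K : ℝ) * M * (Finset.univ.sup' hne (fun i => μ i 1)) + 2 * q * T := by
  classical
  set G : ℝ := Finset.univ.sup' hne (fun i => μ i (pullCount π i T)) with hGdef
  set Mx : ℝ := Finset.univ.sup' hne (fun i => μ i 1) with hMxdef
  have hMxle : ∀ i : Fin K, μ i 1 ≤ Mx := by
    intro i
    rw [hMxdef]
    exact Finset.le_sup' (fun j => μ j 1) (Finset.mem_univ i)
  have hGle : ∀ i : Fin K, μ i (pullCount π i T) ≤ G := by
    intro i
    rw [hGdef]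
    exact Finset.le_sup' (fun j => μ j (pullCount π j T)) (Finset.mem_univ i)
  have hMx0 : (0 : ℝ) < Mx := lt_of_lt_of_le (hpos ⟨0, hK⟩ 1) (hMxle ⟨0, hK⟩)
  set c2 : ℝ := max G (2 * q) with hc2def
  have hc2q : 0 ≤ c2 - 2 * q := by
    have := le_max_right G (2 * q)
    linarith
  -- count bookkeeping
  have hsum_a : ∑ i, pullCount πmax i T = T := sum_pullCount πmax T
  have hsum_b : ∑ i, pullCount π i T = T := sum_pullCount π T
  set β : Fin K → ℕ := fun j =>
    ((Finset.Icc 1 (pullCount π j T)).filter (fun n => μ j n < G - 2 * q)).card with hβdef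
  set m : ℕ := ∑ i, (pullCount πmax i T - pullCount π i T) with hmdef
  set B : ℕ := ∑ i, β i with hBdef
  set W : ℕ := ∑ i, (pullCount π i T - pullCount πmax i T - β i) with hWdef
  have hm : ∑ i, (pullCount π i T - pullCount πmax i T) = m := by
    have h : ∑ i, (pullCount πmax i T + (pullCount π i T - pullCount πmax i T))
        = ∑ i, (pullCount π i T + (pullCount πmax i T - pullCount π i T)) :=
      Finset.sum_congr rfl fun i _ => by omega
    rw [Finset.sum_add_distrib, Finset.sum_add_distrib, hsum_a, hsum_b] at h
    omega
  have hmT : m ≤ T := by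
    have h : m ≤ ∑ i, pullCount πmax i T := Finset.sum_le_sum fun i _ => Nat.sub_le _ _
    omega
  have hBKM : B ≤ K * M := by
    have : B ≤ ∑ _i : Fin K, M := Finset.sum_le_sum fun i _ => hfew i
    simpa [Finset.card_univ, mul_comm] using this
  have hWB : m ≤ W + B := by
    rw [← hm, hWdef, hBdef, ← Finset.sum_add_distrib]
    exact Finset.sum_le_sum fun i _ => by omega
  -- rewrite the difference of rewards
  rw [totalReward_eq μ πmax T, totalReward_eq μ π T, ← Finset.sum_sub_distrib]
  rw [Finset.sum_congr rfl (fun i _ =>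
    sum_Ioc_sub (μ i) (pullCount πmax i T) (pullCount π i T)), Finset.sum_sub_distrib]
  -- bound the surplus sum
  have hX : (∑ i, ∑ n ∈ Finset.Ioc (pullCount π i T) (pullCount πmax i T), μ i n)
      ≤ (m : ℝ) * min Mx c2 := by
    rw [hmdef, Nat.cast_sum, Finset.sum_mul]
    refine Finset.sum_le_sum fun i _ => ?_
    have hb : ∀ n ∈ Finset.Ioc (pullCount π i T) (pullCount πmax i T), μ i n ≤ min Mx c2 := by
      intro n hn
      rw [Finset.mem_Ioc] at hn
      refine le_min ?_ ?_
      · exact le_trans (hanti i (by omega : 1 ≤ n)) (hMxle i)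
      · exact le_trans (le_trans (hanti i (le_of_lt hn.1)) (hGle i)) (le_max_left _ _)
    have := Finset.sum_le_card_nsmul _ _ _ hb
    rwa [Nat.card_Ioc, nsmul_eq_mul] at this
  -- bound the deficit sum
  have hY : (W : ℝ) * (c2 - 2 * q)
      ≤ ∑ i, ∑ n ∈ Finset.Ioc (pullCount πmax i T) (pullCount π i T), μ i n := by
    rw [hWdef, Nat.cast_sum, Finset.sum_mul]
    refine Finset.sum_le_sum fun i _ => ?_
    set s := Finset.Ioc (pullCount πmax i T) (pullCount π i T) with hs
    set t := (Finset.Icc 1 (pullCount π i T)).filter (fun n => μ i n < G - 2 * q) with ht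
    have h1 : pullCount π i T - pullCount πmax i T - β i ≤ (s \ t).card := by
      have h2 := Finset.card_le_card_sdiff_add_card (s := s) (t := t)
      have h3 : s.card = pullCount π i T - pullCount πmax i T := Nat.card_Ioc _ _
      have h4 : t.card = β i := rfl
      omega
    have h4 : ∀ n ∈ s \ t, c2 - 2 * q ≤ μ i n := by
      intro n hn
      rcases Finset.mem_sdiff.mp hn with ⟨hns, hnt⟩
      rw [hs, Finset.mem_Ioc] at hns
      have hmem : n ∈ Finset.Icc 1 (pullCount π i T) := Finset.mem_Icc.mpr (by omega)
      have h5 : ¬ μ i n < G - 2 * q := fun hlt => hnt (Finset.mem_filter.mpr ⟨hmem, hlt⟩)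
      have h6 := hpos i n
      rw [hc2def, sub_le_iff_le_add]
      exact max_le (by linarith [not_lt.mp h5]) (by linarith)
    calc ((pullCount π i T - pullCount πmax i T - β i : ℕ) : ℝ) * (c2 - 2 * q)
        ≤ ((s \ t).card : ℝ) * (c2 - 2 * q) := by
          apply mul_le_mul_of_nonneg_right _ hc2q
          exact_mod_cast h1
      _ ≤ ∑ n ∈ s \ t, μ i n := by
          have := Finset.card_nsmul_le_sum (s \ t) (μ i) (c2 - 2 * q) h4
          rwa [nsmul_eq_mul] at this
      _ ≤ ∑ n ∈ s, μ i n :=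
          Finset.sum_le_sum_of_subset_of_nonneg Finset.sdiff_subset
            (fun n _ _ => (hpos i n).le)
  -- final arithmetic
  have key : (m : ℝ) * min Mx c2 - (W : ℝ) * (c2 - 2 * q)
      ≤ (K : ℝ) * M * Mx + 2 * q * T := by
    have hminMx : min Mx c2 ≤ Mx := min_le_left _ _
    have hminc2 : min Mx c2 ≤ c2 := min_le_right _ _
    have hmin0 : 0 ≤ min Mx c2 := le_min hMx0.le (by linarith [le_max_right G (2 * q)])
    have hBle : (B : ℝ) ≤ (K : ℝ) * M := by exact_mod_cast hBKM
    have hmle : (m : ℝ) ≤ T := by exact_mod_cast hmT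
    rcases le_or_gt m B with h | h
    · have h1 : (m : ℝ) ≤ B := by exact_mod_cast h
      have h2 : 0 ≤ (W : ℝ) * (c2 - 2 * q) := mul_nonneg (Nat.cast_nonneg _) hc2q
      nlinarith
    · have h1 : (B : ℝ) < m := by exact_mod_cast h
      have h2 : (m : ℝ) - B ≤ W := by
        have : (m : ℝ) ≤ W + B := by exact_mod_cast hWB
        linarith
      have h3 : ((m : ℝ) - B) * (c2 - 2 * q) ≤ (W : ℝ) * (c2 - 2 * q) :=
        mul_le_mul_of_nonneg_right h2 hc2q
      have h4 : 0 ≤ ((m : ℝ) - B) * (c2 - min Mx c2) :=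
        mul_nonneg (by linarith) (by linarith)
      have h5 : (B : ℝ) * min Mx c2 ≤ (B : ℝ) * Mx :=
        mul_le_mul_of_nonneg_left hminMx (Nat.cast_nonneg _)
      have h6 : (B : ℝ) * Mx ≤ (K : ℝ) * M * Mx :=
        mul_le_mul_of_nonneg_right hBle hMx0.le
      have h7 : ((m : ℝ) - B) * (2 * q) ≤ (T : ℝ) * (2 * q) :=
        mul_le_mul_of_nonneg_right (by linarith) (by linarith)
      nlinarith
  calc (∑ i, ∑ n ∈ Finset.Ioc (pullCount π i T) (pullCount πmax i T), μ i n)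
      - (∑ i, ∑ n ∈ Finset.Ioc (pullCount πmax i T) (pullCount π i T), μ i n)
      ≤ (m : ℝ) * min Mx c2 - (W : ℝ) * (c2 - 2 * q) := sub_le_sub hX hY
    _ ≤ (K : ℝ) * M * Mx + 2 * q * T := key

/-- If a policy `π` never accumulates, at any time `t ≤ T`, more than `M` pulls `n` of
any arm `j` whose reward `μ_j(n)` is more than `2q` below the current maximal reward
`max_i μ_i(N_i(t))`, then its total reward is within `K·M·max_i μ_i(1) + 2qT` of the
greedy policy's total reward. -/
theorem few_suboptimal_pulls_regret_bound {K : ℕ} (hK : 0 < K)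
    (μ : Fin K → ℕ → ℝ)
    (hpos : ∀ i n, 0 < μ i n)
    (hanti : ∀ i, Antitone (μ i))
    (q : ℝ) (hq : 0 < q) (M : ℕ) (T : ℕ)
    (πmax : ℕ → Fin K) (hgreedy : IsGreedy μ πmax)
    (π : ℕ → Fin K)
    (hfew : ∀ t ≤ T, ∀ j : Fin K,
      (((Finset.Icc 1 (pullCount π j t)).filter (fun n =>
        μ j n < (Finset.univ.sup' (⟨⟨0, hK⟩, Finset.mem_univ _⟩ : (Finset.univ : Finset (Fin K)).Nonempty)
          (fun i => μ i (pullCount π i t))) - 2 * q)).card : ℕ) ≤ M) :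
    totalReward μ πmax T - totalReward μ π T ≤
      (K : ℝ) * M * (Finset.univ.sup' (⟨⟨0, hK⟩, Finset.mem_univ _⟩ : (Finset.univ : Finset (Fin K)).Nonempty)
        (fun i => μ i 1)) + 2 * q * T := by
  exact main_aux hK ⟨⟨0, hK⟩, Finset.mem_univ _⟩ μ hpos hanti q hq M T πmax π
    (fun j => hfew T le_rfl j)
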